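/- Let $x_1,\dots,x_k \in \mathbb{R}^d$ be nonzero at every coordinate used, let $\beta_2, \beta_3 \in (0,1)$ with $\beta_2^2/\beta_3 < 1$, and define $m_k = (1-\beta_2)\sum_{t=1}^k \beta_2^{k-t} x_t$ and $v_k = (1-\beta_3)\sum_{t=1}^k \beta_3^{k-t} x_t^2$ (squaring elementwise), where $v_k$ has strictly positive entries. Then the elementwise quotient satisfies $\left\| \frac{m_k}{\sqrt{v_k}} \right\| \le (1-\beta_2)\sqrt{\frac{d\,\beta_3}{(1-\beta_3)(\beta_3 - \beta_2^2)}}$. -/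

import Mathlib

open Finset

def vec {d : ℕ} (f : Fin d → ℝ) : EuclideanSpace ℝ (Fin d) := WithLp.toLp 2 f

section OrderedField

variable {K ι : Type*} [Field K] [LinearOrder K] [IsStrictOrderedRing K]

lemma sq_sum_pow_mul_le (s : Finset ι) (e : ι → ℕ) (y : ι → K) {a b : K} (hb : 0 < b) :
    (∑ t ∈ s, a ^ e t * y t) ^ 2 ≤ (∑ t ∈ s, (a ^ 2 / b) ^ e t) * ∑ t ∈ s, b ^ e t * y t ^ 2 :=
  sum_sq_le_sum_mul_sum_of_sq_le_mul s (fun _ _ => by positivity) (fun _ _ => by positivity)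
    fun t _ => le_of_eq <| by
      rw [← mul_assoc, ← mul_pow, div_mul_cancel₀ _ hb.ne']; ring

lemma sum_Icc_pow_sub_le {r : K} (hr₀ : 0 ≤ r) (hr₁ : r < 1) (k : ℕ) :
    ∑ t ∈ Icc 1 k, r ^ (k - t) ≤ 1 / (1 - r) := by
  have reflect : ∑ t ∈ Icc 1 k, r ^ (k - t) = ∑ j ∈ Ico 0 k, r ^ j :=
    sum_nbij' (k - ·) (k - ·) (by simp; omega) (by simp; omega) (by simp; omega)
      (by simp; omega) (fun _ _ => rfl)
  simpa [reflect] using geom_sum_Ico_le_of_lt_one (m := 0) (n := k) hr₀ hr₁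

end OrderedField

lemma sq_momentum_le {β₂ β₃ : ℝ} (hβ₃ : β₃ ∈ Set.Ioo (0 : ℝ) 1) (hsq : β₂ ^ 2 < β₃)
    (k : ℕ) (y : ℕ → ℝ) :
    ((1 - β₂) * ∑ t ∈ Icc 1 k, β₂ ^ (k - t) * y t) ^ 2 ≤
      (1 - β₂) ^ 2 * (β₃ / ((1 - β₃) * (β₃ - β₂ ^ 2))) *
        ((1 - β₃) * ∑ t ∈ Icc 1 k, β₃ ^ (k - t) * y t ^ 2) := by
  obtain ⟨hβ₃₀, hβ₃₁⟩ := hβ₃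
  have hgap : 0 < β₃ - β₂ ^ 2 := by linarith
  have hgeom : ∑ t ∈ Icc 1 k, (β₂ ^ 2 / β₃) ^ (k - t) ≤ β₃ / (β₃ - β₂ ^ 2) := by
    refine (sum_Icc_pow_sub_le (by positivity) ((div_lt_one hβ₃₀).mpr hsq) k).trans_eq ?_
    field_simp
  have hS : 0 ≤ ∑ t ∈ Icc 1 k, β₃ ^ (k - t) * y t ^ 2 := by positivity
  calc ((1 - β₂) * ∑ t ∈ Icc 1 k, β₂ ^ (k - t) * y t) ^ 2
      ≤ (1 - β₂) ^ 2 * ((∑ t ∈ Icc 1 k, (β₂ ^ 2 / β₃) ^ (k - t)) *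
          ∑ t ∈ Icc 1 k, β₃ ^ (k - t) * y t ^ 2) := by
        rw [mul_pow]; gcongr; exact sq_sum_pow_mul_le _ _ _ hβ₃₀
    _ ≤ (1 - β₂) ^ 2 * (β₃ / (β₃ - β₂ ^ 2) * ∑ t ∈ Icc 1 k, β₃ ^ (k - t) * y t ^ 2) := by
        gcongr
    _ = _ := by field_simp

lemma norm_vec_le_sqrt_of_sq_le {d : ℕ} {f : Fin d → ℝ} {c : ℝ} (hf : ∀ i, f i ^ 2 ≤ c) :
    ‖vec f‖ ≤ √(d * c) := by
  rw [EuclideanSpace.norm_eq]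
  gcongr
  calc ∑ i, ‖f i‖ ^ 2 = ∑ i, f i ^ 2 := by simp only [Real.norm_eq_abs, sq_abs]
    _ ≤ ∑ _i : Fin d, c := sum_le_sum fun i _ => hf i
    _ = d * c := by simp

theorem normalized_momentum_bound_general
    {d : ℕ} (k : ℕ) (β₂ β₃ : ℝ)
    (hβ₂ : β₂ ∈ Set.Ioo (0 : ℝ) 1) (hβ₃ : β₃ ∈ Set.Ioo (0 : ℝ) 1)
    (hratio : β₂ ^ 2 / β₃ < 1)
    (x : ℕ → EuclideanSpace ℝ (Fin d))
    (m v : EuclideanSpace ℝ (Fin d))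
    (hm : m = vec (fun i => (1 - β₂) * ∑ t ∈ Finset.Icc 1 k, β₂ ^ (k - t) * x t i))
    (hv : v = vec (fun i => (1 - β₃) * ∑ t ∈ Finset.Icc 1 k, β₃ ^ (k - t) * (x t i) ^ 2))
    (hvpos : ∀ i, 0 < v i) :
    ‖vec (fun i => m i / Real.sqrt (v i))‖ ≤
      (1 - β₂) * Real.sqrt (d * β₃ / ((1 - β₃) * (β₃ - β₂ ^ 2))) := by
  have hsq : β₂ ^ 2 < β₃ := (div_lt_one hβ₃.1).mp hratio
  have hcoord : ∀ i, (m i / √(v i)) ^ 2 ≤ (1 - β₂) ^ 2 * (β₃ / ((1 - β₃) * (β₃ - β₂ ^ 2))) := by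
    intro i
    rw [div_pow, Real.sq_sqrt (hvpos i).le, div_le_iff₀ (hvpos i)]
    subst hm hv
    exact sq_momentum_le hβ₃ hsq k (fun t => x t i)
  calc ‖vec (fun i => m i / √(v i))‖
      ≤ √(d * ((1 - β₂) ^ 2 * (β₃ / ((1 - β₃) * (β₃ - β₂ ^ 2))))) :=
        norm_vec_le_sqrt_of_sq_le hcoord
    _ = (1 - β₂) * √(d * β₃ / ((1 - β₃) * (β₃ - β₂ ^ 2))) := by
        rw [mul_left_comm, Real.sqrt_mul (sq_nonneg _), Real.sqrt_sq (by linarith [hβ₂.2]),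
          mul_div_assoc]

/-- Bound on the normalized momentum: for `m_k = (1-β₂) ∑_{t=1}^k β₂^{k-t} x_t` and
`v_k = (1-β₃) ∑_{t=1}^k β₃^{k-t} x_t²` (elementwise), with `x_t` nonzero in every
coordinate, `β₂, β₃ ∈ (0,1)`, `β₂²/β₃ < 1` and `v_k` strictly positive, one has
`‖m_k/√v_k‖ ≤ (1-β₂) √(d β₃ / ((1-β₃)(β₃ - β₂²)))`. -/
theorem normalized_momentum_bound
    {d : ℕ} (k : ℕ) (β₂ β₃ : ℝ)
    (hβ₂ : β₂ ∈ Set.Ioo (0 : ℝ) 1) (hβ₃ : β₃ ∈ Set.Ioo (0 : ℝ) 1)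
    (hratio : β₂ ^ 2 / β₃ < 1)
    (x : ℕ → EuclideanSpace ℝ (Fin d))
    (hx : ∀ t ∈ Finset.Icc 1 k, ∀ i, x t i ≠ 0)
    (m v : EuclideanSpace ℝ (Fin d))
    (hm : m = vec (fun i => (1 - β₂) * ∑ t ∈ Finset.Icc 1 k, β₂ ^ (k - t) * x t i))
    (hv : v = vec (fun i => (1 - β₃) * ∑ t ∈ Finset.Icc 1 k, β₃ ^ (k - t) * (x t i) ^ 2))
    (hvpos : ∀ i, 0 < v i) :
    ‖vec (fun i => m i / Real.sqrt (v i))‖ ≤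
      (1 - β₂) * Real.sqrt (d * β₃ / ((1 - β₃) * (β₃ - β₂ ^ 2))) :=
  normalized_momentum_bound_general k β₂ β₃ hβ₂ hβ₃ hratio x m v hm hv hvpos
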